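/- Let γ, θ : K → Ann_K(J) be additive maps satisfying γ(J) = θ(J) = 0, γ(x₁)x₂ = γ(x₂)x₁, and x₁θ(x₂) = x₂θ(x₁) for all x₁, x₂ ∈ K. Then the map Δ̄ : R → R defined by Δ̄(x e_{2,1}) = γ(x) e_{n,2}, Δ̄(x e_{n,n−1}) = θ(x) e_{n−1,1}, and Δ̄(x_{i,j} e_{i,j}) = 0 for (i,j) ≠ (2,1), (n,n−1) (extended additively over entries) is a Lie derivation of R. -/

import Mathlib

/-- Membership in `R = R_n(K,J)`: entries on and above the main diagonal lie in `J`. -/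
def Rmem {K : Type*} [Ring K] {n : ℕ} (J : AddSubgroup K)
    (M : Matrix (Fin n) (Fin n) K) : Prop :=
  ∀ i j : Fin n, i ≤ j → M i j ∈ J

/-- A Lie derivation of `R = R_n(K,J)`. -/
def IsLieDerOn {K : Type*} [Ring K] {n : ℕ} (J : AddSubgroup K)
    (D : Matrix (Fin n) (Fin n) K → Matrix (Fin n) (Fin n) K) : Prop :=
  (∀ A, Rmem J A → Rmem J (D A)) ∧
  (∀ A B, Rmem J A → Rmem J B → D (A + B) = D A + D B) ∧
  (∀ A B, Rmem J A → Rmem J B →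
    D (A * B - B * A) = (D A * B - B * D A) + (A * D B - D B * A))

/-!
Write `Δ̄ M = e_{n,2} γ(M₂₁) + e_{n-1,1} θ(M_{n,n-1})`. Its image lies strictly below the
diagonal, so `Δ̄` maps `R` into `R`. For `A, B ∈ R` the `(2,1)` and `(n,n-1)` entries of
`AB - BA` lie in `J` (every index `k` satisfies `2 ≤ k` or `k ≤ 1`, resp. `n ≤ k` or `k ≤ n-1`),
so `Δ̄ (AB - BA) = 0`. Since `γ` and `θ` take values in `Ann_K(J)`, multiplying `Δ̄ X` by a
matrix of `R` on either side only sees one entry lying outside `J`, and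
`[Δ̄ A, B] + [A, Δ̄ B] = e_{n,1} (γ(A₂₁)B₂₁ - γ(B₂₁)A₂₁ + A_{n,n-1}θ(B_{n,n-1}) - B_{n,n-1}θ(A_{n,n-1}))`,
which vanishes by the two symmetry conditions.
-/

section SingleMul

variable {ι R : Type*} [Fintype ι] [DecidableEq ι] [NonUnitalNonAssocSemiring R]

theorem single_mul_eq_single_of_forall_ne {x : R} {M : Matrix ι ι R} {i j l : ι}
    (h : ∀ k, k ≠ l → x * M j k = 0) :
    Matrix.single i j x * M = Matrix.single i l (x * M j l) := by
  ext a b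
  rcases eq_or_ne a i with rfl | ha
  · rw [Matrix.single_mul_apply_same]
    rcases eq_or_ne b l with rfl | hb
    · rw [Matrix.single_apply_same]
    · rw [h b hb, Matrix.single_apply_of_col_ne _ _ (Ne.symm hb)]
  · rw [Matrix.single_mul_apply_of_ne _ _ _ _ _ ha, Matrix.single_apply_of_row_ne (Ne.symm ha)]

theorem mul_single_eq_single_of_forall_ne {x : R} {M : Matrix ι ι R} {i j l : ι}
    (h : ∀ k, k ≠ l → M k i * x = 0) :
    M * Matrix.single i j x = Matrix.single l j (M l i * x) := by
  ext a b
  rcases eq_or_ne b j with rfl | hb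
  · rw [Matrix.mul_single_apply_same]
    rcases eq_or_ne a l with rfl | ha
    · rw [Matrix.single_apply_same]
    · rw [h a ha, Matrix.single_apply_of_row_ne (Ne.symm ha)]
  · rw [Matrix.mul_single_apply_of_ne _ _ _ _ _ hb, Matrix.single_apply_of_col_ne _ _ (Ne.symm hb)]

theorem single_mul_eq_zero_of_forall {x : R} {M : Matrix ι ι R} {i j : ι}
    (h : ∀ k, x * M j k = 0) : Matrix.single i j x * M = 0 := by
  rw [single_mul_eq_single_of_forall_ne (l := j) fun k _ => h k, h j, Matrix.single_zero]

theorem mul_single_eq_zero_of_forall {x : R} {M : Matrix ι ι R} {i j : ι}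
    (h : ∀ k, M k i * x = 0) : M * Matrix.single i j x = 0 := by
  rw [mul_single_eq_single_of_forall_ne (l := i) fun k _ => h k, h i, Matrix.single_zero]

end SingleMul

section Rmem

variable {K : Type*} [Ring K] {n : ℕ} {J : AddSubgroup K}

theorem Rmem.single {i j : Fin n} (hji : j < i) (x : K) : Rmem J (Matrix.single i j x) :=
  fun _ _ h => by
    rw [Matrix.single_apply_of_ne _ _ _ _ _ fun ⟨hi, hj⟩ => (hi ▸ hj ▸ h).not_gt hji]
    exact J.zero_mem

theorem Rmem.add {A B : Matrix (Fin n) (Fin n) K} (hA : Rmem J A) (hB : Rmem J B) :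
    Rmem J (A + B) :=
  fun i j h => J.add_mem (hA i j h) (hB i j h)

theorem Rmem.mul_apply_mem (hJl : ∀ r : K, ∀ y ∈ J, r * y ∈ J)
    (hJr : ∀ r : K, ∀ y ∈ J, y * r ∈ J) {A B : Matrix (Fin n) (Fin n) K} (hA : Rmem J A) (hB : Rmem J B)
    {i j : Fin n} (h : ∀ k, i ≤ k ∨ k ≤ j) : (A * B) i j ∈ J := by
  rw [Matrix.mul_apply]
  exact J.sum_mem fun k _ =>
    (h k).elim (fun hk => hJr _ _ (hA i k hk)) (fun hk => hJl _ _ (hB k j hk))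

theorem Rmem.commutator_apply_mem (hJl : ∀ r : K, ∀ y ∈ J, r * y ∈ J)
    (hJr : ∀ r : K, ∀ y ∈ J, y * r ∈ J) {A B : Matrix (Fin n) (Fin n) K} (hA : Rmem J A)
    (hB : Rmem J B) {i j : Fin n} (h : ∀ k, i ≤ k ∨ k ≤ j) : (A * B - B * A) i j ∈ J :=
  J.sub_mem (hA.mul_apply_mem hJl hJr hB h) (hB.mul_apply_mem hJl hJr hA h)


theorem isLieDerOn_single_add_single (hJl : ∀ r : K, ∀ y ∈ J, r * y ∈ J)
    (hJr : ∀ r : K, ∀ y ∈ J, y * r ∈ J) (γ θ : K →+ K)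
    (hγA : ∀ x : K, ∀ y ∈ J, γ x * y = 0 ∧ y * γ x = 0)
    (hθA : ∀ x : K, ∀ y ∈ J, θ x * y = 0 ∧ y * θ x = 0)
    (hγJ : ∀ y ∈ J, γ y = 0) (hθJ : ∀ y ∈ J, θ y = 0)
    (hγsym : ∀ x₁ x₂ : K, γ x₁ * x₂ = γ x₂ * x₁)
    (hθsym : ∀ x₁ x₂ : K, x₁ * θ x₂ = x₂ * θ x₁)
    {p q z o : Fin n} (hp : (p : ℕ) = n - 1) (hq : (q : ℕ) = n - 2) (hz : (z : ℕ) = 0)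
    (ho : (o : ℕ) = 1) (hn : 3 ≤ n) :
    IsLieDerOn J (fun M : Matrix (Fin n) (Fin n) K =>
      Matrix.single p o (γ (M o z)) + Matrix.single q z (θ (M p q))) := by
  have hop : o < p := by rw [Fin.lt_def]; omega
  have hzq : z < q := by rw [Fin.lt_def]; omega
  have hp_top : ∀ k : Fin n, k ≤ p := fun k => by rw [Fin.le_def]; omega
  have hz_bot : ∀ k : Fin n, z ≤ k := fun k => by rw [Fin.le_def]; omega
  have hoz : ∀ k : Fin n, o ≤ k ∨ k ≤ z := fun k => by rw [Fin.le_def, Fin.le_def]; omega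
  have hpq : ∀ k : Fin n, p ≤ k ∨ k ≤ q := fun k => by rw [Fin.le_def, Fin.le_def]; omega
  refine ⟨fun A _ => (Rmem.single hop _).add (Rmem.single hzq _), fun A B _ _ => ?_, ?_⟩
  · simp only [Matrix.add_apply, map_add, Matrix.single_add]
    abel
  intro A B hA hB
  have hcomm : Matrix.single p o (γ ((A * B - B * A) o z)) +
      Matrix.single q z (θ ((A * B - B * A) p q)) = 0 := by
    rw [hγJ _ (hA.commutator_apply_mem hJl hJr hB hoz),
      hθJ _ (hA.commutator_apply_mem hJl hJr hB hpq), Matrix.single_zero, Matrix.single_zero,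
      add_zero]
  have hleft : ∀ M, Rmem J M → ∀ a b,
      (Matrix.single p o (γ a) + Matrix.single q z (θ b)) * M = Matrix.single p z (γ a * M o z) :=
    fun M hM a b => by
      rw [add_mul, single_mul_eq_zero_of_forall fun k => (hθA _ _ (hM z k (hz_bot k))).1,
        add_zero, single_mul_eq_single_of_forall_ne fun k hk =>
          (hγA _ _ (hM o k ((hoz k).resolve_right fun h => hk (le_antisymm h (hz_bot k))))).1]
  have hright : ∀ M, Rmem J M → ∀ a b,
      M * (Matrix.single p o (γ a) + Matrix.single q z (θ b)) = Matrix.single p z (M p q * θ b) :=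
    fun M hM a b => by
      rw [mul_add, mul_single_eq_zero_of_forall fun k => (hγA _ _ (hM k p (hp_top k))).2,
        zero_add, mul_single_eq_single_of_forall_ne fun k hk =>
          (hθA _ _ (hM k q ((hpq k).resolve_left fun h => hk (le_antisymm (hp_top k) h)))).2]
  beta_reduce
  rw [hcomm, hleft B hB, hright B hB, hright A hA, hleft A hA, hγsym (A o z),
    hθsym (A p q)]
  abel

end Rmem

/-- The special map of type I, `[a_{i,j}] ↦ γ(a_{2,1}) e_{n,2} + θ(a_{n,n-1}) e_{n-1,1}`,
is a Lie derivation of `R` when `γ, θ : K → Ann_K(J)` are additive, vanish on `J`, and satisfy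
`γ(x₁)x₂ = γ(x₂)x₁` and `x₁θ(x₂) = x₂θ(x₁)`. -/
theorem special_lie_derivation_type_I {K : Type*} [Ring K] {n : ℕ} (hn : 3 ≤ n)
    (J : AddSubgroup K)
    (hJl : ∀ r : K, ∀ y ∈ J, r * y ∈ J) (hJr : ∀ r : K, ∀ y ∈ J, y * r ∈ J)
    (γ θ : K →+ K)
    (hγA : ∀ x : K, ∀ y ∈ J, γ x * y = 0 ∧ y * γ x = 0)
    (hθA : ∀ x : K, ∀ y ∈ J, θ x * y = 0 ∧ y * θ x = 0)
    (hγJ : ∀ y ∈ J, γ y = 0) (hθJ : ∀ y ∈ J, θ y = 0)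
    (hγsym : ∀ x₁ x₂ : K, γ x₁ * x₂ = γ x₂ * x₁)
    (hθsym : ∀ x₁ x₂ : K, x₁ * θ x₂ = x₂ * θ x₁) :
    IsLieDerOn J (fun M : Matrix (Fin n) (Fin n) K =>
      Matrix.single ⟨n - 1, by omega⟩ ⟨1, by omega⟩ (γ (M ⟨1, by omega⟩ ⟨0, by omega⟩)) +
        Matrix.single ⟨n - 2, by omega⟩ ⟨0, by omega⟩
          (θ (M ⟨n - 1, by omega⟩ ⟨n - 2, by omega⟩))) :=
  isLieDerOn_single_add_single hJl hJr γ θ hγA hθA hγJ hθJ hγsym hθsym rfl rfl rfl rfl hn
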